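/- arXiv:2109.12892 — 2 statements merged into one kernel-verified Lean document; each statement's English description precedes it below -/
import Mathlib

section
/- Let n ≥ 2 be an integer. The set of values gcd(γ − 1, n) as γ ranges over integers coprime to n equals the set of all divisors of n if n is odd, and the set of all even divisors of n if n is even. -/
/-!
If `n` is even, every `γ` coprime to `n` is odd, so `2 ∣ gcd (γ - 1) n`; and `gcd (γ - 1) n`
always divides `n`. Conversely, by the Chinese remainder theorem the set of values is
multiplicative over coprime factorisations of `n`, and on a prime power `p ^ k` a divisor `d`
(even when `p = 2`) is the value at `γ = 1 + d`.
-/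

theorem Int.ModEq.gcd_eq {a b n : ℤ} (h : a ≡ b [ZMOD n]) : Int.gcd a n = Int.gcd b n := by
  rw [← Int.gcd_emod, h, Int.gcd_emod]

theorem Int.gcd_natCast_mul_of_coprime (x : ℤ) {a b : ℕ} (hab : a.Coprime b) :
    Int.gcd x ↑(a * b) = Int.gcd x a * Int.gcd x b :=
  Nat.Coprime.gcd_mul x.natAbs hab

theorem Int.exists_modEq_and_modEq {m n : ℤ} (h : IsCoprime m n) (a b : ℤ) :
    ∃ x, x ≡ a [ZMOD m] ∧ x ≡ b [ZMOD n] := by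
  obtain ⟨u, v, huv⟩ := h
  refine ⟨a * (v * n) + b * (u * m), ?_, ?_⟩
  · exact Int.modEq_iff_dvd.mpr ⟨(a - b) * u, by linear_combination (-a) * huv⟩
  · exact Int.modEq_iff_dvd.mpr ⟨(b - a) * v, by linear_combination (-b) * huv⟩

def reidemeisterSpectrum (n : ℕ) : Set ℕ :=
  {d | ∃ γ : ℤ, Int.gcd γ n = 1 ∧ Int.gcd (γ - 1) n = d}

theorem dvd_of_mem_reidemeisterSpectrum {n d : ℕ} (hd : d ∈ reidemeisterSpectrum n) :
    d ∣ n := by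
  obtain ⟨γ, -, rfl⟩ := hd
  exact Int.gcd_dvd_natAbs_right _ _

theorem two_dvd_of_mem_reidemeisterSpectrum {n d : ℕ} (hn : 2 ∣ n)
    (hd : d ∈ reidemeisterSpectrum n) : 2 ∣ d := by
  obtain ⟨γ, hγ, rfl⟩ := hd
  have hn' : (2 : ℤ) ∣ n := by exact_mod_cast hn
  have hγ_odd : ¬ (2 : ℤ) ∣ γ := fun h => by simpa [hγ] using Int.dvd_coe_gcd h hn'
  exact_mod_cast Int.dvd_coe_gcd (by omega : (2 : ℤ) ∣ γ - 1) hn'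

theorem mul_mem_reidemeisterSpectrum_mul {a b d e : ℕ} (hab : a.Coprime b)
    (hd : d ∈ reidemeisterSpectrum a) (he : e ∈ reidemeisterSpectrum b) :
    d * e ∈ reidemeisterSpectrum (a * b) := by
  obtain ⟨γ₁, hγ₁, rfl⟩ := hd
  obtain ⟨γ₂, hγ₂, rfl⟩ := he
  obtain ⟨γ, h₁, h₂⟩ :=
    Int.exists_modEq_and_modEq (Nat.isCoprime_iff_coprime.mpr hab) γ₁ γ₂
  refine ⟨γ, ?_, ?_⟩
  · rw [Int.gcd_natCast_mul_of_coprime _ hab, h₁.gcd_eq, h₂.gcd_eq, hγ₁, hγ₂]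
  · rw [Int.gcd_natCast_mul_of_coprime _ hab, (h₁.sub_right 1).gcd_eq,
      (h₂.sub_right 1).gcd_eq]

theorem mem_reidemeisterSpectrum_of_coprime_one_add {n d : ℕ} (hd : d ∣ n)
    (h : (1 + d).Coprime n) : d ∈ reidemeisterSpectrum n :=
  ⟨1 + d, by exact_mod_cast h, by simpa using Nat.gcd_eq_left hd⟩

theorem mem_reidemeisterSpectrum_prime_pow {p k d : ℕ} (hp : p.Prime) (hk : k ≠ 0)
    (hd : d ∣ p ^ k) (h2 : 2 ∣ p ^ k → 2 ∣ d) : d ∈ reidemeisterSpectrum (p ^ k) := by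
  refine mem_reidemeisterSpectrum_of_coprime_one_add hd (Nat.Coprime.pow_right k ?_)
  rw [Nat.coprime_comm, hp.coprime_iff_not_dvd]
  intro hp_dvd
  by_cases hpd : p ∣ d
  · exact hp.not_dvd_one ((Nat.dvd_add_left hpd).mp hp_dvd)
  · obtain rfl : d = 1 :=
      ((hp.coprime_iff_not_dvd.mpr hpd).symm.pow_right k).eq_one_of_dvd hd
    obtain rfl : p = 2 := (Nat.prime_dvd_prime_iff_eq hp Nat.prime_two).mp hp_dvd
    exact absurd (h2 (dvd_pow_self 2 hk)) (by norm_num)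

theorem mem_reidemeisterSpectrum_of_dvd {n d : ℕ} (hn : n ≠ 0) (hd : d ∣ n)
    (h2 : 2 ∣ n → 2 ∣ d) : d ∈ reidemeisterSpectrum n := by
  induction n using Nat.recOnPosPrimePosCoprime generalizing d with
  | prime_pow p k hp hk => exact mem_reidemeisterSpectrum_prime_pow hp hk.ne' hd h2
  | zero => exact absurd rfl hn
  | one => exact mem_reidemeisterSpectrum_of_coprime_one_add hd (Nat.coprime_one_right _)
  | coprime a b ha hb hab iha ihb =>
    have hsplit : d = d.gcd a * d.gcd b := by
      rw [← Nat.Coprime.gcd_mul d hab, Nat.gcd_eq_left hd]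
    rw [hsplit]
    exact mul_mem_reidemeisterSpectrum_mul hab
      (iha (by omega) (Nat.gcd_dvd_right _ _)
        fun h => Nat.dvd_gcd (h2 (dvd_mul_of_dvd_left h b)) h)
      (ihb (by omega) (Nat.gcd_dvd_right _ _)
        fun h => Nat.dvd_gcd (h2 (dvd_mul_of_dvd_right h a)) h)

theorem mem_reidemeisterSpectrum_iff {n d : ℕ} (hn : n ≠ 0) :
    d ∈ reidemeisterSpectrum n ↔ d ∣ n ∧ (2 ∣ n → 2 ∣ d) :=
  ⟨fun h => ⟨dvd_of_mem_reidemeisterSpectrum h,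
      fun h2 => two_dvd_of_mem_reidemeisterSpectrum h2 h⟩,
    fun h => mem_reidemeisterSpectrum_of_dvd hn h.1 h.2⟩

theorem stmt3 (n : ℕ) (hn : 2 ≤ n) :
    (Odd n →
      {d : ℕ | ∃ γ : ℤ, Int.gcd γ n = 1 ∧ Int.gcd (γ - 1) n = d} = {d : ℕ | d ∣ n}) ∧
    (Even n →
      {d : ℕ | ∃ γ : ℤ, Int.gcd γ n = 1 ∧ Int.gcd (γ - 1) n = d} =
        {d : ℕ | d ∣ n ∧ 2 ∣ d}) := by
  have hspec (d : ℕ) := mem_reidemeisterSpectrum_iff (d := d) (by omega : n ≠ 0)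
  refine ⟨fun hodd => Set.ext fun d => ?_, fun heven => Set.ext fun d => ?_⟩
  · exact (hspec d).trans (by simp [hodd.not_two_dvd_nat])
  · exact (hspec d).trans (by simp [heven.two_dvd])
end

section
/- Let n ≥ 1 be an integer and p a prime not dividing n. Let a be an integer with gcd(a, n) = gcd(a − 1, n) = 1 such that a has multiplicative order p modulo n. Suppose d₀, …, d_{p−1} are pairwise coprime divisors of n, with the extra condition that if p = 2 and 3 ∣ n then 3 ∣ d₀d₁. Then there exists an integer γ with gcd(γ, n) = 1 such that gcd(γ − aⁱ, n) = dᵢ for all i ∈ {0, …, p − 1}. -/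
/-!
Since `gcd (γ - c) n` depends only on `γ mod n` and is multiplicative in `n` over coprime
factors, the Chinese remainder theorem reduces the problem to a prime power `n = q ^ e`. Modulo
`q` the element `a` has order `p`, so `1, a, …, a ^ (p - 1)` are `p` distinct nonzero residues
and `p ∣ q - 1`. Pairwise coprime divisors of `q ^ e` are all `1` except possibly one,
`d j = q ^ v`; then `γ = a ^ j + q ^ v` works. If all of them are `1`, any residue outside
`{0, 1, a, …, a ^ (p - 1)}` works; one exists because `q ≥ p + 2`, except when
`(p, q) = (2, 3)`, which is exactly the case ruled out by `3 ∣ d₀ d₁`.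
-/

open Finset Function

def GcdRealizable {ι : Type*} (c : ι → ℤ) (n : ℕ) (d : ι → ℕ) : Prop :=
  ∃ γ : ℤ, Int.gcd γ n = 1 ∧ ∀ i, Int.gcd (γ - c i) n = d i

theorem Int.ModEq.gcd_eq_s8 {m x y : ℤ} (h : x ≡ y [ZMOD m]) : Int.gcd x m = Int.gcd y m := by
  rw [← Int.gcd_emod, h, Int.gcd_emod]

theorem Int.gcd_natCast_mul_of_coprime_s8 {m k : ℕ} (hmk : m.Coprime k) (z : ℤ) :
    Int.gcd z (m * k : ℕ) = Int.gcd z m * Int.gcd z k :=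
  hmk.gcd_mul z.natAbs

theorem Int.exists_modEq_and_modEq_s8 {m k : ℤ} (hmk : IsCoprime m k) (x y : ℤ) :
    ∃ z, z ≡ x [ZMOD m] ∧ z ≡ y [ZMOD k] := by
  obtain ⟨u, v, huv⟩ := hmk
  refine ⟨x * (v * k) + y * (u * m), Int.modEq_iff_dvd.2 ⟨(x - y) * u, ?_⟩,
    Int.modEq_iff_dvd.2 ⟨(y - x) * v, ?_⟩⟩
  · linear_combination (-x) * huv
  · linear_combination (-y) * huv

theorem Int.gcd_prime_pow_eq_one_iff {q e : ℕ} (hq : q.Prime) (he : e ≠ 0) (x : ℤ) :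
    Int.gcd x (q ^ e : ℕ) = 1 ↔ (x : ZMod q) ≠ 0 := by
  rw [Ne, ZMod.intCast_zmod_eq_zero_iff_dvd, Int.natCast_dvd, ← hq.coprime_iff_not_dvd,
    Nat.coprime_comm, ← Nat.coprime_pow_right_iff (Nat.pos_of_ne_zero he)]
  rfl

theorem Nat.Prime.add_two_le_of_dvd_sub_one {p q : ℕ} (hp : p.Prime) (hq : q.Prime)
    (hpq : p ∣ q - 1) (h23 : ¬(p = 2 ∧ q = 3)) : p + 2 ≤ q := by
  have := Nat.le_of_dvd (by have := hq.two_le; omega) hpq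
  have := hp.two_le
  rcases hp.eq_two_or_odd with rfl | hp2 <;> rcases hq.eq_two_or_odd with rfl | hq2 <;> omega

theorem Nat.Prime.dvd_prod_gcd {ι : Type*} {r m : ℕ} (hr : r.Prime) (hrm : r ∣ m)
    {s : Finset ι} {f : ι → ℕ} (h : r ∣ ∏ i ∈ s, f i) : r ∣ ∏ i ∈ s, (f i).gcd m := by
  obtain ⟨i, hi, hri⟩ := (hr.prime.dvd_finsetProd_iff f).1 h
  exact (Nat.dvd_gcd hri hrm).trans (dvd_prod_of_mem _ hi)

theorem eq_one_or_eq_mulSingle_of_dvd_prime_pow {ι : Type*} [DecidableEq ι] {q e : ℕ}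
    (hq : q.Prime) {d : ι → ℕ} (hd : ∀ i, d i ∣ q ^ e) (hcop : Pairwise (Nat.Coprime on d)) :
    d = 1 ∨ ∃ j v, v ≠ 0 ∧ v ≤ e ∧ d = Pi.mulSingle j (q ^ v) := by
  by_cases hd1 : d = 1
  · exact .inl hd1
  obtain ⟨j, hj⟩ := Function.ne_iff.1 hd1
  obtain ⟨v, hve, hdj⟩ := (Nat.dvd_prime_pow hq).1 (hd j)
  have hv : v ≠ 0 := by rintro rfl; exact hj hdj
  refine .inr ⟨j, v, hv, hve, funext fun i => ?_⟩
  rcases eq_or_ne i j with rfl | hij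
  · simp [hdj]
  · rw [Pi.mulSingle_eq_of_ne hij]
    have hiv : (d i).Coprime (q ^ v) := hdj ▸ hcop hij
    have hiq : (d i).Coprime q := hiv.coprime_dvd_right (dvd_pow_self q hv)
    exact (hiq.pow_right e).eq_one_of_dvd (hd i)

section GcdRealizable

variable {ι : Type*} {c : ι → ℤ}

theorem gcdRealizable_one : GcdRealizable c 1 1 :=
  ⟨0, by simp, fun _ => by simp⟩

theorem GcdRealizable.mul {m k : ℕ} {d₁ d₂ : ι → ℕ} (hmk : m.Coprime k)
    (h₁ : GcdRealizable c m d₁) (h₂ : GcdRealizable c k d₂) :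
    GcdRealizable c (m * k) (d₁ * d₂) := by
  obtain ⟨γ₁, hγ₁, hd₁⟩ := h₁
  obtain ⟨γ₂, hγ₂, hd₂⟩ := h₂
  obtain ⟨z, hz₁, hz₂⟩ := Int.exists_modEq_and_modEq_s8 (Nat.isCoprime_iff_coprime.2 hmk) γ₁ γ₂
  have key (x : ℤ) : Int.gcd (z - x) (m * k : ℕ) = Int.gcd (γ₁ - x) m * Int.gcd (γ₂ - x) k := by
    rw [Int.gcd_natCast_mul_of_coprime_s8 hmk, (hz₁.sub_right x).gcd_eq_s8, (hz₂.sub_right x).gcd_eq_s8]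
  refine ⟨z, ?_, fun i => ?_⟩
  · simpa [hγ₁, hγ₂] using key 0
  · rw [key, hd₁, hd₂, Pi.mul_apply]

variable {q e : ℕ} [hq : Fact q.Prime]

theorem gcdRealizable_prime_pow_one [Fintype ι] (he : e ≠ 0) (hcard : Fintype.card ι + 2 ≤ q) :
    GcdRealizable c (q ^ e) 1 := by
  classical
  let avoid : Finset (ZMod q) := insert 0 (univ.image fun i => (c i : ZMod q))
  have hlt : #avoid < #(univ : Finset (ZMod q)) := calc
    #avoid ≤ #(univ.image fun i => (c i : ZMod q)) + 1 := card_insert_le _ _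
    _ ≤ Fintype.card ι + 1 := Nat.add_le_add_right (card_image_le.trans_eq card_univ) 1
    _ < #univ := by rw [card_univ, ZMod.card]; omega
  obtain ⟨x, -, hx⟩ := exists_mem_notMem_of_card_lt_card hlt
  have hx0 : x ≠ 0 := fun h => hx (h ▸ mem_insert_self _ _)
  have hxc (i : ι) : x ≠ c i :=
    fun h => hx (h ▸ mem_insert_of_mem (mem_image_of_mem _ (mem_univ i)))
  refine ⟨x.val, ?_, fun i => ?_⟩
  · rw [Int.gcd_prime_pow_eq_one_iff hq.out he]
    simpa using hx0
  · rw [Pi.one_apply, Int.gcd_prime_pow_eq_one_iff hq.out he]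
    simpa [sub_eq_zero] using hxc i

theorem gcdRealizable_prime_pow_mulSingle [DecidableEq ι] {v : ℕ} (hv : v ≠ 0) (hve : v ≤ e)
    (hc : Injective fun i => (c i : ZMod q)) {j : ι} (hcj : (c j : ZMod q) ≠ 0) :
    GcdRealizable c (q ^ e) (Pi.mulSingle j (q ^ v)) := by
  have he : e ≠ 0 := by omega
  have hqv : ((q ^ v : ℕ) : ZMod q) = 0 := by
    rw [ZMod.natCast_eq_zero_iff]; exact dvd_pow_self q hv
  refine ⟨c j + (q ^ v : ℕ), ?_, fun i => ?_⟩
  · rw [Int.gcd_prime_pow_eq_one_iff hq.out he]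
    simpa [hqv, zero_pow hv] using hcj
  rcases eq_or_ne i j with rfl | hij
  · rw [add_sub_cancel_left, Int.gcd_natCast_natCast, Pi.mulSingle_eq_same,
      Nat.gcd_eq_left (pow_dvd_pow q hve)]
  · rw [Pi.mulSingle_eq_of_ne hij, Int.gcd_prime_pow_eq_one_iff hq.out he]
    simpa [hqv, zero_pow hv, sub_eq_zero] using hc.ne hij.symm

end GcdRealizable

theorem gcdRealizable_pow_of_prime_pow {p q e : ℕ} (hp : p.Prime) (hq : q.Prime) (he : e ≠ 0)
    {a : ℤ} (ha : orderOf (a : ZMod q) = p) {d : Fin p → ℕ} (hd : ∀ i, d i ∣ q ^ e)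
    (hcop : Pairwise (Nat.Coprime on d)) (h3 : p = 2 → q = 3 → 3 ∣ ∏ i, d i) :
    GcdRealizable (fun i : Fin p => a ^ (i : ℕ)) (q ^ e) d := by
  have := Fact.mk hq
  have ha0 : (a : ZMod q) ≠ 0 :=
    (IsUnit.of_pow_eq_one (ha ▸ pow_orderOf_eq_one _) hp.ne_zero).ne_zero
  rcases eq_one_or_eq_mulSingle_of_dvd_prime_pow hq hd hcop with rfl | ⟨j, v, hv, hve, rfl⟩
  · refine gcdRealizable_prime_pow_one he ?_
    rw [Fintype.card_fin]
    refine hp.add_two_le_of_dvd_sub_one hq (ha ▸ ZMod.orderOf_dvd_card_sub_one ha0) ?_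
    rintro ⟨hp2, hq3⟩
    simpa using h3 hp2 hq3
  · refine gcdRealizable_prime_pow_mulSingle hv hve (fun i i' h => Fin.ext ?_)
      (by push_cast; exact pow_ne_zero _ ha0)
    exact pow_injOn_Iio_orderOf (x := (a : ZMod q)) (by simp [ha]) (by simp [ha])
      (by simpa using h)

theorem gcdRealizable_pow {p : ℕ} (hp : p.Prime) {a : ℤ} {n : ℕ} (hn : n ≠ 0)
    (hord : ∀ q, q.Prime → q ∣ n → orderOf (a : ZMod q) = p) (d : Fin p → ℕ)
    (hd : ∀ i, d i ∣ n) (hcop : Pairwise (Nat.Coprime on d))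
    (h3 : p = 2 → 3 ∣ n → 3 ∣ ∏ i, d i) :
    GcdRealizable (fun i : Fin p => a ^ (i : ℕ)) n d := by
  induction n using Nat.recOnPosPrimePosCoprime generalizing d with
  | zero => exact absurd rfl hn
  | one =>
    rw [show d = 1 from funext fun i => Nat.dvd_one.1 (hd i)]
    exact gcdRealizable_one
  | prime_pow q e hq he =>
    exact gcdRealizable_pow_of_prime_pow hp hq he.ne' (hord q hq (dvd_pow_self q he.ne')) hd hcop
      fun hp2 hq3 => h3 hp2 (by rw [← hq3]; exact dvd_pow_self q he.ne')
  | coprime m k hm hk hmk ihm ihk =>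
    have hsplit : d = (fun i => (d i).gcd m) * fun i => (d i).gcd k :=
      funext fun i => by rw [Pi.mul_apply, ← hmk.gcd_mul, Nat.gcd_eq_left (hd i)]
    have hcop_gcd (l : ℕ) : Pairwise (Nat.Coprime on fun i => (d i).gcd l) := fun i j hij =>
      ((hcop hij).coprime_dvd_left (Nat.gcd_dvd_left _ _)).coprime_dvd_right (Nat.gcd_dvd_left _ _)
    have hm' := ihm (by omega) (fun q hq hqm => hord q hq (hqm.mul_right k)) _
      (fun i => Nat.gcd_dvd_right _ _) (hcop_gcd m)
      fun hp2 h3m => Nat.prime_three.dvd_prod_gcd h3m (h3 hp2 (h3m.mul_right k))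
    have hk' := ihk (by omega) (fun q hq hqk => hord q hq (hqk.mul_left m)) _
      (fun i => Nat.gcd_dvd_right _ _) (hcop_gcd k)
      fun hp2 h3k => Nat.prime_three.dvd_prod_gcd h3k (h3 hp2 (h3k.mul_left m))
    exact hsplit ▸ hm'.mul hmk hk'

theorem orderOf_intCast_zmod_eq_of_dvd {p n q : ℕ} [Fact p.Prime] (hq : q.Prime) (hqn : q ∣ n)
    {a : ℤ} (hord : orderOf (a : ZMod n) = p) (ha1 : Int.gcd (a - 1) n = 1) :
    orderOf (a : ZMod q) = p := by
  apply orderOf_eq_prime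
  · have h := congrArg (ZMod.castHom hqn (ZMod q)) (pow_orderOf_eq_one (a : ZMod n))
    rwa [hord, map_pow, map_one, map_intCast] at h
  · intro ha
    have hqa : (q : ℤ) ∣ a - 1 := by
      rw [← ZMod.intCast_zmod_eq_zero_iff_dvd]; push_cast; rw [ha, sub_self]
    have := Int.dvd_coe_gcd hqa (Int.natCast_dvd_natCast.2 hqn)
    rw [ha1] at this
    exact hq.one_lt.ne' (Nat.dvd_one.1 (Int.natCast_dvd_natCast.1 this))

theorem stmt8_general (n : ℕ) (hn : 1 ≤ n) (p : ℕ) (hp : p.Prime)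
    (a : ℤ) (ha1 : Int.gcd (a - 1) n = 1)
    (hord : orderOf (a : ZMod n) = p)
    (d : Fin p → ℕ) (hd : ∀ i, d i ∣ n)
    (hcop : ∀ i j, i ≠ j → Nat.Coprime (d i) (d j))
    (h3 : p = 2 → 3 ∣ n → 3 ∣ ∏ i, d i) :
    ∃ γ : ℤ, Int.gcd γ n = 1 ∧ ∀ i : Fin p, Int.gcd (γ - a ^ (i : ℕ)) n = d i := by
  have := Fact.mk hp
  exact gcdRealizable_pow hp (by omega)
    (fun q hq hqn => orderOf_intCast_zmod_eq_of_dvd hq hqn hord ha1) d hd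
    (fun i j hij => hcop i j hij) h3

theorem stmt8 (n : ℕ) (hn : 1 ≤ n) (p : ℕ) (hp : p.Prime) (hpn : ¬ p ∣ n)
    (a : ℤ) (ha : Int.gcd a n = 1) (ha1 : Int.gcd (a - 1) n = 1)
    (hord : orderOf (a : ZMod n) = p)
    (d : Fin p → ℕ) (hd : ∀ i, d i ∣ n) (hdpos : ∀ i, 0 < d i)
    (hcop : ∀ i j, i ≠ j → Nat.Coprime (d i) (d j))
    (h3 : p = 2 → 3 ∣ n → 3 ∣ ∏ i, d i) :
    ∃ γ : ℤ, Int.gcd γ n = 1 ∧ ∀ i : Fin p, Int.gcd (γ - a ^ (i : ℕ)) n = d i :=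
  stmt8_general n hn p hp a ha1 hord d hd hcop h3
end
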